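/- arXiv:1612.08051 — 2 statements merged into one kernel-verified Lean document; each statement's English description precedes it below -/
import Mathlib

section
/- Let R be a Poisson algebra over a field K. Then the upper Lie powers satisfy {R^(i), R^(j)} ⊆ R^(i+j) for all i, j ≥ 0; in particular the family {R^(n) | n ≥ 0} forms a filtration of R compatible with both the associative product and the Poisson bracket. -/
/-- A Poisson algebra structure on a commutative `K`-algebra `R`:
a `K`-bilinear bracket which is antisymmetric, satisfies the Jacobi identity
and the Leibniz rule. -/
structure PoissonStr (K R : Type*) [Field K] [CommRing R] [Algebra K R] where
  bracket : R →ₗ[K] R →ₗ[K] R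
  antisymm : ∀ a b : R, bracket a b = - bracket b a
  jacobi : ∀ a b c : R,
    bracket (bracket a b) c + bracket (bracket b c) a + bracket (bracket c a) b = 0
  leibniz : ∀ a b c : R, bracket (a * b) c = a * bracket b c + b * bracket a c

namespace PoissonStr

variable {K R : Type*} [Field K] [CommRing R] [Algebra K R]

/-- The span `{M, N}` of brackets of elements of two subspaces. -/
def sBr (P : PoissonStr K R) (M N : Submodule K R) : Submodule K R :=
  Submodule.span K {z : R | ∃ m ∈ M, ∃ n ∈ N, z = P.bracket m n}

/-- Upper Lie powers: `R^(0) = R`, `R^(n+1) = {R^(n), R}·R`. -/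
def upper (P : PoissonStr K R) : ℕ → Submodule K R
  | 0 => ⊤
  | n + 1 => P.sBr (upper P n) ⊤ * ⊤

/-- Lower central series of `R` as a Lie algebra: `γ_1 = R`,
`γ_{n+1} = {γ_n, R}` (with the convention `γ_0 = R`). -/
def gamma (P : PoissonStr K R) : ℕ → Submodule K R
  | 0 => ⊤
  | 1 => ⊤
  | n + 2 => P.sBr (gamma P (n + 1)) ⊤

/-- Derived series of `R` as a Lie algebra. -/
def derived (P : PoissonStr K R) : ℕ → Submodule K R
  | 0 => ⊤
  | n + 1 => P.sBr (derived P n) (derived P n)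

/-- Upper derived series: `δ̃_0 = R`, `δ̃_{n+1} = {δ̃_n, δ̃_n}·R`. -/
def uderived (P : PoissonStr K R) : ℕ → Submodule K R
  | 0 => ⊤
  | n + 1 => P.sBr (uderived P n) (uderived P n) * ⊤

end PoissonStr

namespace PoissonStr

variable {K R : Type*} [Field K] [CommRing R] [Algebra K R]

variable (P : PoissonStr K R)

lemma bracket_mem_sBr {M N : Submodule K R} {m n : R} (hm : m ∈ M) (hn : n ∈ N) :
    P.bracket m n ∈ P.sBr M N :=
  Submodule.subset_span ⟨m, hm, n, hn, rfl⟩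

lemma sBr_le {M N Q : Submodule K R}
    (h : ∀ m ∈ M, ∀ n ∈ N, P.bracket m n ∈ Q) : P.sBr M N ≤ Q := by
  rw [sBr, Submodule.span_le]
  rintro z ⟨m, hm, n, hn, rfl⟩
  exact h m hm n hn

lemma sBr_mono {M M' N N' : Submodule K R} (h1 : M ≤ M') (h2 : N ≤ N') :
    P.sBr M N ≤ P.sBr M' N' :=
  P.sBr_le fun m hm n hn => P.bracket_mem_sBr (h1 hm) (h2 hn)

lemma sBr_comm (M N : Submodule K R) : P.sBr M N = P.sBr N M := by
  have key : ∀ A B : Submodule K R, P.sBr A B ≤ P.sBr B A := fun A B =>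
    P.sBr_le fun m hm n hn => by
      rw [P.antisymm]
      exact neg_mem (P.bracket_mem_sBr hn hm)
  exact le_antisymm (key M N) (key N M)

/-- Jacobi rearranged. -/
lemma jacobi' (a b c : R) :
    P.bracket (P.bracket a b) c
      = P.bracket a (P.bracket b c) + P.bracket (P.bracket a c) b := by
  have h := P.jacobi a b c
  have e1 : P.bracket (P.bracket b c) a = - P.bracket a (P.bracket b c) :=
    P.antisymm _ _
  have e2 : P.bracket (P.bracket c a) b = - P.bracket (P.bracket a c) b := by
    rw [P.antisymm c a, map_neg, LinearMap.neg_apply]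
  rw [e1, e2] at h
  linear_combination h

end PoissonStr

namespace PoissonStr
variable {K R : Type*} [Field K] [CommRing R] [Algebra K R] (P : PoissonStr K R)

lemma upper_congr {m n : ℕ} (h : m = n) : P.upper m ≤ P.upper n := h ▸ le_rfl

/-- Submodule-level Leibniz rule. -/
lemma sBr_mul_le (A B C : Submodule K R) :
    P.sBr (A * B) C ≤ A * P.sBr B C ⊔ B * P.sBr A C := by
  refine P.sBr_le fun p hp c hc => ?_
  refine Submodule.mul_induction_on hp (fun a ha b hb => ?_) (fun x y hx hy => ?_)
  · rw [P.leibniz a b c]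
    exact add_mem
      (le_sup_left (α := Submodule K R)
        (Submodule.mul_mem_mul ha (P.bracket_mem_sBr hb hc)))
      (le_sup_right (α := Submodule K R)
        (Submodule.mul_mem_mul hb (P.bracket_mem_sBr ha hc)))
  · rw [map_add, LinearMap.add_apply]
    exact add_mem hx hy

/-- Submodule-level rearranged Leibniz: `a·{c,d} = {ac,d} - c·{a,d}`. -/
lemma mul_sBr_le (A C D : Submodule K R) :
    A * P.sBr C D ≤ P.sBr (A * C) D ⊔ C * P.sBr A D := by
  refine Submodule.mul_le.mpr fun a ha w hw => ?_
  induction hw using Submodule.span_induction with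
  | mem z hz =>
      obtain ⟨c, hc, d, hd, rfl⟩ := hz
      have key : a * P.bracket c d
          = P.bracket (a * c) d - c * P.bracket a d := by
        rw [P.leibniz a c d]; ring
      rw [key]
      exact sub_mem
        (le_sup_left (α := Submodule K R)
          (P.bracket_mem_sBr (Submodule.mul_mem_mul ha hc) hd))
        (le_sup_right (α := Submodule K R)
          (Submodule.mul_mem_mul hc (P.bracket_mem_sBr ha hd)))
  | zero => rw [mul_zero]; exact zero_mem _
  | add x y hx hy ihx ihy => rw [mul_add]; exact add_mem ihx ihy
  | smul k x hx ihx => rw [mul_smul_comm]; exact Submodule.smul_mem _ _ ihx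

/-- Submodule-level Jacobi identity. -/
lemma sBr_sBr_le (A B C : Submodule K R) :
    P.sBr (P.sBr A B) C ≤ P.sBr A (P.sBr B C) ⊔ P.sBr (P.sBr A C) B := by
  refine P.sBr_le fun q hq c hc => ?_
  induction hq using Submodule.span_induction with
  | mem z hz =>
      obtain ⟨a, ha, b, hb, rfl⟩ := hz
      rw [P.jacobi' a b c]
      exact add_mem
        (le_sup_left (α := Submodule K R)
          (P.bracket_mem_sBr ha (P.bracket_mem_sBr hb hc)))
        (le_sup_right (α := Submodule K R)
          (P.bracket_mem_sBr (P.bracket_mem_sBr ha hc) hb))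
  | zero => rw [map_zero, LinearMap.zero_apply]; exact zero_mem _
  | add x y hx hy ihx ihy => rw [map_add, LinearMap.add_apply]; exact add_mem ihx ihy
  | smul k x hx ihx =>
      rw [map_smul, LinearMap.smul_apply]; exact Submodule.smul_mem _ _ ihx

lemma le_mul_top (M : Submodule K R) : M ≤ M * ⊤ := fun m hm => by
  simpa using Submodule.mul_mem_mul hm (Submodule.mem_top (x := (1 : R)))

lemma top_mul_top : (⊤ : Submodule K R) * ⊤ = ⊤ :=
  le_antisymm le_top (le_mul_top ⊤)

lemma upper_mul_top (n : ℕ) : P.upper n * ⊤ ≤ P.upper n := by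
  cases n with
  | zero => exact le_top
  | succ n => rw [upper, mul_assoc, top_mul_top]

lemma sBr_upper_top_le (n : ℕ) : P.sBr (P.upper n) ⊤ ≤ P.upper (n + 1) :=
  le_mul_top _

/-- Product claim: `R^(i) · R^(j) ≤ R^(i+j)`, by induction on `j`. -/
lemma upper_mul_le : ∀ j i : ℕ, P.upper i * P.upper j ≤ P.upper (i + j) := by
  intro j
  induction j with
  | zero => intro i; exact P.upper_mul_top i
  | succ j ih =>
      intro i
      cases i with
      | zero =>
          rw [mul_comm, zero_add]
          exact P.upper_mul_top (j + 1)
      | succ i =>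
          have hY : P.sBr (P.upper i) ⊤ ≤ P.upper (i + 1) := P.sBr_upper_top_le i
          show P.sBr (P.upper i) ⊤ * ⊤ * (P.sBr (P.upper j) ⊤ * ⊤)
              ≤ P.upper (i + 1 + (j + 1))
          have hrearr : P.sBr (P.upper i) ⊤ * ⊤ * (P.sBr (P.upper j) ⊤ * ⊤)
              = (P.sBr (P.upper i) ⊤ * P.sBr (P.upper j) ⊤) * (⊤ * ⊤) := by
            ring
          rw [hrearr, top_mul_top]
          have hYZ : P.sBr (P.upper i) ⊤ * P.sBr (P.upper j) ⊤
              ≤ P.upper (i + 1 + (j + 1)) := by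
            refine le_trans (P.mul_sBr_le _ _ _) (sup_le ?_ ?_)
            · have h1 : P.sBr (P.upper i) ⊤ * P.upper j ≤ P.upper (i + 1 + j) :=
                le_trans (mul_le_mul_left hY _) (ih (i + 1))
              exact le_trans (P.sBr_mono h1 le_rfl)
                (le_trans (P.sBr_upper_top_le _) (P.upper_congr (by omega)))
            · have h2 : P.sBr (P.sBr (P.upper i) ⊤) ⊤ ≤ P.upper (i + 2) :=
                le_trans (P.sBr_mono hY le_rfl) (P.sBr_upper_top_le (i + 1))
              refine le_trans (mul_le_mul_right h2 _) ?_
              refine le_trans (le_of_eq (mul_comm _ _)) ?_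
              exact le_trans (ih (i + 2)) (P.upper_congr (by omega))
          exact le_trans (mul_le_mul_left hYZ _) (P.upper_mul_top _)

/-- `{R^(n), R} ≤ R^(n)`. -/
lemma sBr_upper_top_le_self : ∀ n : ℕ, P.sBr (P.upper n) ⊤ ≤ P.upper n := by
  intro n
  induction n with
  | zero => exact le_top
  | succ n ih =>
      show P.sBr (P.sBr (P.upper n) ⊤ * ⊤) ⊤ ≤ P.upper (n + 1)
      refine le_trans (P.sBr_mul_le _ _ _) (sup_le ?_ ?_)
      · exact mul_le_mul_right le_top _
      · exact le_trans (mul_le_mul_right (P.sBr_mono ih le_rfl) _)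
          (le_of_eq (mul_comm _ _))

/-- Descending filtration. -/
lemma upper_antitone (n : ℕ) : P.upper (n + 1) ≤ P.upper n :=
  le_trans (mul_le_mul_left (P.sBr_upper_top_le_self n) ⊤) (P.upper_mul_top n)

/-- Bracket claim: `{R^(i), R^(j)} ≤ R^(i+j)`. -/
lemma sBr_upper_le : ∀ i j : ℕ, P.sBr (P.upper i) (P.upper j) ≤ P.upper (i + j) := by
  intro i
  induction i with
  | zero =>
      intro j
      rw [P.sBr_comm, zero_add]
      exact P.sBr_upper_top_le_self j
  | succ i ih =>
      intro j
      show P.sBr (P.sBr (P.upper i) ⊤ * ⊤) (P.upper j) ≤ P.upper (i + 1 + j)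
      refine le_trans (P.sBr_mul_le _ _ _) (sup_le ?_ ?_)
      · have h1 : P.sBr ⊤ (P.upper j) ≤ P.upper (j + 1) := by
          rw [P.sBr_comm]; exact P.sBr_upper_top_le j
        refine le_trans (mul_le_mul' (P.sBr_upper_top_le i) h1) ?_
        refine le_trans (P.upper_mul_le (j + 1) (i + 1)) ?_
        exact le_trans (P.upper_congr (by omega : i + 1 + (j + 1) = (i + 1 + j) + 1))
          (P.upper_antitone _)
      · have h2 : P.sBr (P.sBr (P.upper i) ⊤) (P.upper j) ≤ P.upper (i + 1 + j) := by
          refine le_trans (P.sBr_sBr_le _ _ _) (sup_le ?_ ?_)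
          · have h3 : P.sBr ⊤ (P.upper j) ≤ P.upper (j + 1) := by
              rw [P.sBr_comm]; exact P.sBr_upper_top_le j
            exact le_trans (P.sBr_mono le_rfl h3)
              (le_trans (ih (j + 1)) (P.upper_congr (by omega)))
          · exact le_trans (P.sBr_mono (ih j) le_rfl)
              (le_trans (P.sBr_upper_top_le _) (P.upper_congr (by omega)))
        exact le_trans (mul_le_mul_right h2 _)
          (le_trans (le_of_eq (mul_comm _ _)) (P.upper_mul_top _))

end PoissonStr

/-- `{R^(i), R^(j)} ⊆ R^(i+j)`; in particular the upper Lie powers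
form a descending filtration compatible with both the associative product and
the Poisson bracket. -/
theorem upper_isFiltration {K R : Type*} [Field K] [CommRing R] [Algebra K R]
    (P : PoissonStr K R) :
    (∀ i j : ℕ, P.sBr (P.upper i) (P.upper j) ≤ P.upper (i + j)) ∧
    (∀ n : ℕ, P.upper (n + 1) ≤ P.upper n) ∧
    (∀ i j : ℕ, P.upper i * P.upper j ≤ P.upper (i + j)) :=
  ⟨P.sBr_upper_le, P.upper_antitone, fun i j => P.upper_mul_le j i⟩
end

section
/- Let R be a Poisson algebra, m ≥ 1, a_5 ∈ γ_m(R), and a_1, a_2, a_3, a_4 ∈ R. Then 3·{a_1,a_2,a_3}{a_4,a_5} ∈ γ_{m+3}(R)·R. -/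
namespace PoissonStr

variable {K R : Type*} [Field K] [CommRing R] [Algebra K R]

lemma mem_sBr' (P : PoissonStr K R) {M N : Submodule K R} {x y : R} (hx : x ∈ M) (hy : y ∈ N) :
    P.bracket x y ∈ P.sBr M N :=
  Submodule.subset_span ⟨x, hx, y, hy, rfl⟩

lemma gamma_brk (P : PoissonStr K R) :
    ∀ (j i : ℕ) (x y : R), x ∈ P.gamma (i + 1) → y ∈ P.gamma (j + 1) →
      P.bracket x y ∈ P.gamma (i + j + 2) := by
  intro j
  induction j with
  | zero => exact fun i x y hx _ => P.mem_sBr' hx Submodule.mem_top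
  | succ j ih =>
    intro i x y hx hy
    have hy' : y ∈ Submodule.span K {z : R | ∃ u ∈ P.gamma (j + 1), ∃ v ∈ (⊤ : Submodule K R), z = P.bracket u v} := hy
    refine Submodule.span_induction ?_ ?_ ?_ ?_ hy'
    · rintro z ⟨u, hu, v, -, rfl⟩
      have h1 : P.bracket (P.bracket x u) v ∈ P.gamma (i + j + 3) :=
        P.mem_sBr' (ih i x u hx hu) Submodule.mem_top
      have hvx : P.bracket v x ∈ P.gamma (i + 1 + 1) := by
        have : P.bracket x v ∈ P.gamma (i + 2) := P.mem_sBr' hx Submodule.mem_top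
        rw [P.antisymm v x]
        exact Submodule.neg_mem _ this
      have h2 : P.bracket (P.bracket v x) u ∈ P.gamma (i + 1 + j + 2) :=
        ih (i + 1) _ u hvx hu
      have e : i + 1 + j + 2 = i + j + 3 := by omega
      rw [e] at h2
      have heq : P.bracket x (P.bracket u v)
          = P.bracket (P.bracket x u) v + P.bracket (P.bracket v x) u := by
        linear_combination P.antisymm x (P.bracket u v) - P.jacobi x u v
      rw [heq]
      exact Submodule.add_mem _ h1 h2
    · simp only [map_zero]; exact Submodule.zero_mem _
    · intro z w _ _ hz hw
      rw [map_add]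
      exact Submodule.add_mem _ hz hw
    · intro c z _ hz
      rw [map_smul]
      exact Submodule.smul_mem _ c hz

lemma mem_g2 (P : PoissonStr K R) (u v : R) : P.bracket u v ∈ P.gamma 2 :=
  P.mem_sBr' Submodule.mem_top Submodule.mem_top

lemma mem_g3 (P : PoissonStr K R) (u v w : R) :
    P.bracket (P.bracket u v) w ∈ P.gamma 3 :=
  P.mem_sBr' (P.mem_g2 u v) Submodule.mem_top

lemma w4_last (P : PoissonStr K R) (k : ℕ) (a5 : R) (h5 : a5 ∈ P.gamma (k + 1)) (u v w : R) :
    P.bracket (P.bracket (P.bracket u v) w) a5 ∈ P.gamma (k + 4) := by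
  have := P.gamma_brk k 2 (P.bracket (P.bracket u v) w) a5 (P.mem_g3 u v w) h5
  have e : 2 + k + 2 = k + 4 := by omega
  rwa [e] at this

lemma w4_mid (P : PoissonStr K R) (k : ℕ) (a5 : R) (h5 : a5 ∈ P.gamma (k + 1)) (u v w : R) :
    P.bracket (P.bracket (P.bracket u v) a5) w ∈ P.gamma (k + 4) := by
  have h3 : P.bracket (P.bracket u v) a5 ∈ P.gamma (k + 3) := by
    have := P.gamma_brk k 1 (P.bracket u v) a5 (P.mem_g2 u v) h5
    have e : 1 + k + 2 = k + 3 := by omega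
    rwa [e] at this
  exact P.mem_sBr' h3 Submodule.mem_top

lemma mul_right_mem (P : PoissonStr K R) {n : ℕ} {s : R} (hs : s ∈ P.gamma n) (t : R) :
    t * s ∈ P.gamma n * ⊤ := by
  have h1 : s * t ∈ P.gamma n * ⊤ := Submodule.mul_mem_mul hs Submodule.mem_top
  exact mul_comm s t ▸ h1

lemma tswap (P : PoissonStr K R) (x y z : R) :
    P.bracket (P.bracket y x) z = - P.bracket (P.bracket x y) z := by
  rw [P.antisymm y x, map_neg, LinearMap.neg_apply]

lemma expand4 (P : PoissonStr K R) (x y p q r : R) :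
    P.bracket (P.bracket (P.bracket (x * y) p) q) r = (1 : R) * (P.bracket (P.bracket (P.bracket x p) q) r) * (y) + (1 : R) * (P.bracket (P.bracket x p) q) * (P.bracket y r) + (1 : R) * (P.bracket (P.bracket x p) r) * (P.bracket y q) + (1 : R) * (P.bracket x p) * (P.bracket (P.bracket y q) r) + (1 : R) * (P.bracket (P.bracket x q) r) * (P.bracket y p) + (1 : R) * (P.bracket x q) * (P.bracket (P.bracket y p) r) + (1 : R) * (P.bracket x r) * (P.bracket (P.bracket y p) q) + (1 : R) * (x) * (P.bracket (P.bracket (P.bracket y p) q) r) := by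
  simp only [P.leibniz, map_add, LinearMap.add_apply]
  ring

end PoissonStr

set_option maxHeartbeats 2000000 in
/-- if `a₅ ∈ γ_m(R)` (`m ≥ 1`) then
`3·{a₁,a₂,a₃}{a₄,a₅} ∈ γ_{m+3}(R)·R` (brackets left-normed). -/
theorem three_mul_lemma {K R : Type*} [Field K] [CommRing R] [Algebra K R]
    (P : PoissonStr K R) (m : ℕ) (hm : 1 ≤ m) (a1 a2 a3 a4 a5 : R)
    (h : a5 ∈ P.gamma m) :
    (3 : R) * (P.bracket (P.bracket a1 a2) a3 * P.bracket a4 a5)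
      ∈ P.gamma (m + 3) * ⊤ := by
  obtain ⟨k, rfl⟩ : ∃ k, m = k + 1 := ⟨m - 1, by omega⟩
  have h5 : a5 ∈ P.gamma (k + 1) := h
  have key : (3 : R) * (P.bracket (P.bracket a1 a2) a3 * P.bracket a4 a5) =
      (((-1) : R) * (P.bracket (P.bracket (P.bracket (a1 * a2) a3) a5) a4)) + ((1 : R) * (P.bracket (P.bracket (P.bracket (a1 * a2) a4) a5) a3)) + (((-2) : R) * (P.bracket (P.bracket (P.bracket (a1 * a3) a2) a5) a4)) + ((3 : R) * (P.bracket (P.bracket (P.bracket (a1 * a3) a4) a2) a5)) + (((-1) : R) * (P.bracket (P.bracket (P.bracket (a1 * a3) a4) a5) a2)) + ((2 : R) * (P.bracket (P.bracket (P.bracket (a1 * a4) a2) a5) a3)) + ((1 : R) * (P.bracket (P.bracket (P.bracket (a1 * a4) a3) a5) a2)) + (((-3) : R) * (P.bracket (P.bracket (P.bracket (a2 * a3) a4) a1) a5)) + ((1 : R) * (P.bracket (P.bracket (P.bracket (a2 * a3) a4) a5) a1)) + (((-1) : R) * (P.bracket (P.bracket (P.bracket (a2 * a4) a3) a5) a1))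 + (((1 : R) * a2) * (P.bracket (P.bracket (P.bracket a1 a3) a5) a4)) + (((1 : R) * a1) * (P.bracket (P.bracket (P.bracket a2 a3) a5) a4)) + ((((-1) : R) * a2) * (P.bracket (P.bracket (P.bracket a1 a4) a5) a3)) + ((((-1) : R) * a1) * (P.bracket (P.bracket (P.bracket a2 a4) a5) a3)) + (((2 : R) * a3) * (P.bracket (P.bracket (P.bracket a1 a2) a5) a4)) + (((2 : R) * a1) * (P.bracket (P.bracket (P.bracket a3 a2) a5) a4)) + ((((-3) : R) * a3) * (P.bracket (P.bracket (P.bracket a1 a4) a2) a5)) + ((((-3) : R) * a1) * (P.bracket (P.bracket (P.bracket a3 a4) a2) a5)) + (((1 : R) * a3) * (P.bracket (P.bracket (P.bracket a1 a4) a5) a2)) + (((1 : R) * a1) * (P.bracket (P.bracket (P.bracket a3 a4) a5) a2)) + ((((-2) : R) * a4) * (P.bracket (P.bracket (P.bracket a1 a2) a5) a3)) + ((((-2) : R) * a1) * (P.bracket (P.bracket (P.bracket a4 a2) a5) a3)) + ((((-1) : R) * a4) * (P.bracket (P.bracket (P.bracket a1 a3) a5) a2)) + ((((-1) : R) * a1)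 * (P.bracket (P.bracket (P.bracket a4 a3) a5) a2)) + (((3 : R) * a3) * (P.bracket (P.bracket (P.bracket a2 a4) a1) a5)) + (((3 : R) * a2) * (P.bracket (P.bracket (P.bracket a3 a4) a1) a5)) + ((((-1) : R) * a3) * (P.bracket (P.bracket (P.bracket a2 a4) a5) a1)) + ((((-1) : R) * a2) * (P.bracket (P.bracket (P.bracket a3 a4) a5) a1)) + (((1 : R) * a4) * (P.bracket (P.bracket (P.bracket a2 a3) a5) a1)) + (((1 : R) * a2) * (P.bracket (P.bracket (P.bracket a4 a3) a5) a1)) := by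
    linear_combination (1 : R) * P.expand4 a1 a2 a3 a5 a4 + ((-1) : R) * P.expand4 a1 a2 a4 a5 a3 + (2 : R) * P.expand4 a1 a3 a2 a5 a4 + ((-3) : R) * P.expand4 a1 a3 a4 a2 a5 + (1 : R) * P.expand4 a1 a3 a4 a5 a2 + ((-2) : R) * P.expand4 a1 a4 a2 a5 a3 + ((-1) : R) * P.expand4 a1 a4 a3 a5 a2 + (3 : R) * P.expand4 a2 a3 a4 a1 a5 + ((-1) : R) * P.expand4 a2 a3 a4 a5 a1 + (1 : R) * P.expand4 a2 a4 a3 a5 a1 + ((2 : R) * (P.bracket (P.bracket a1 a5) a4)) * (P.antisymm a3 a2) + ((2 : R) * (P.bracket a1 a5)) * (P.tswap a2 a3 a4) + (((-1) : R) * (P.bracket a1 a4)) * (P.tswap a2 a3 a5) + (((-2) : R) * (P.bracket (P.bracket a1 a4) a5)) * (P.antisymm a3 a2) + (((-1) : R) * (P.bracket a1 a5)) * (P.jacobi a3 a4 a2) + ((1 : R) * (P.bracket a1 a4)) * (P.jacobi a3 a5 a2) + (((-2) : R) * (P.bracket (P.bracket a1 a2) a5)) * (P.antisymm a4 a3) +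 (((-2) : R) * (P.bracket a1 a2)) * (P.jacobi a4 a5 a3) + (((-2) : R) * (P.bracket (P.bracket a1 a5) a3)) * (P.antisymm a4 a2) + (((-2) : R) * (P.bracket a1 a3)) * (P.tswap a2 a4 a5) + (((-1) : R) * (P.bracket (P.bracket a1 a3) a5)) * (P.antisymm a4 a2) + (((-1) : R) * (P.bracket a1 a3)) * (P.jacobi a4 a5 a2) + (((-1) : R) * (P.bracket (P.bracket a1 a5) a2)) * (P.antisymm a4 a3) + (((-1) : R) * (P.bracket a1 a5)) * (P.tswap a3 a4 a2) + (((-2) : R) * (P.bracket a1 a2)) * (P.tswap a3 a4 a5) + ((2 : R) * (P.bracket a3 a5)) * (P.jacobi a2 a4 a1) + ((2 : R) * (P.bracket (P.bracket a2 a4) a5)) * (P.antisymm a3 a1) + ((3 : R) * (P.bracket a2 a4)) * (P.tswap a1 a3 a5) + ((3 : R) * (P.bracket a3 a4)) * (P.tswap a1 a2 a5) + ((2 : R) * (P.bracket (P.bracket a3 a4) a5)) * (P.antisymm a2 a1) + ((1 : R) * (P.bracket a2 a5)) * (P.jacobi a3 a4 a1) + (((-1) : R) * (P.bracket a2 a4))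 * (P.jacobi a3 a5 a1) + (((-2) : R) * (P.bracket a3 a4)) * (P.jacobi a2 a5 a1) + ((1 : R) * (P.bracket (P.bracket a2 a3) a5)) * (P.antisymm a4 a1) + ((1 : R) * (P.bracket a4 a5)) * (P.jacobi a2 a3 a1) + ((1 : R) * (P.bracket a2 a3)) * (P.jacobi a4 a5 a1) + ((1 : R) * (P.bracket (P.bracket a2 a5) a1)) * (P.antisymm a4 a3) + ((1 : R) * (P.bracket a2 a5)) * (P.tswap a3 a4 a1) + ((1 : R) * (P.bracket (P.bracket a4 a3) a5)) * (P.antisymm a2 a1) + (((-1) : R) * (P.bracket a1 a4)) * (P.tswap a2 a5 a3) + ((2 : R) * (P.bracket a1 a2)) * (P.tswap a3 a5 a4) + ((1 : R) * (P.bracket a1 a3)) * (P.tswap a2 a5 a4) + (((-2) : R) * (P.bracket a3 a5)) * (P.tswap a1 a4 a2) + (((-1) : R) * (P.bracket a2 a5)) * (P.tswap a1 a4 a3) + ((1 : R) * (P.bracket a2 a4)) * (P.tswap a1 a5 a3) + ((2 : R) * (P.bracket a3 a4)) * (P.tswap a1 a5 a2) + (((-1) : R) * (P.bracket a4 a5))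 * (P.tswap a1 a3 a2) + (((-1) : R) * (P.bracket a2 a3)) * (P.tswap a1 a5 a4) + (((-1) : R) * (P.bracket a1 a5)) * (P.tswap a2 a4 a3)
  rw [key]
  exact Submodule.add_mem _ (Submodule.add_mem _ (Submodule.add_mem _ (Submodule.add_mem _ (Submodule.add_mem _ (Submodule.add_mem _ (Submodule.add_mem _ (Submodule.add_mem _ (Submodule.add_mem _ (Submodule.add_mem _ (Submodule.add_mem _ (Submodule.add_mem _ (Submodule.add_mem _ (Submodule.add_mem _ (Submodule.add_mem _ (Submodule.add_mem _ (Submodule.add_mem _ (Submodule.add_mem _ (Submodule.add_mem _ (Submodule.add_mem _ (Submodule.add_mem _ (Submodule.add_mem _ (Submodule.add_mem _ (Submodule.add_mem _ (Submodule.add_mem _ (Submodule.add_mem _ (Submodule.add_mem _ (Submodule.add_mem _ (Submodule.add_mem _ (P.mul_right_mem (P.w4_mid k a5 h5 (a1 * a2) a3 a4) ((-1) : R)) (P.mul_right_mem (P.w4_mid k a5 h5 (a1 * a2) a4 a3) (1 : R))) (P.mul_right_mem (P.w4_mid k a5 h5 (a1 * a3) a2 a4) ((-2) : R))) (P.mul_right_mem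 (P.w4_last k a5 h5 (a1 * a3) a4 a2) (3 : R))) (P.mul_right_mem (P.w4_mid k a5 h5 (a1 * a3) a4 a2) ((-1) : R))) (P.mul_right_mem (P.w4_mid k a5 h5 (a1 * a4) a2 a3) (2 : R))) (P.mul_right_mem (P.w4_mid k a5 h5 (a1 * a4) a3 a2) (1 : R))) (P.mul_right_mem (P.w4_last k a5 h5 (a2 * a3) a4 a1) ((-3) : R))) (P.mul_right_mem (P.w4_mid k a5 h5 (a2 * a3) a4 a1) (1 : R))) (P.mul_right_mem (P.w4_mid k a5 h5 (a2 * a4) a3 a1) ((-1) : R))) (P.mul_right_mem (P.w4_mid k a5 h5 a1 a3 a4) ((1 : R) * a2))) (P.mul_right_mem (P.w4_mid k a5 h5 a2 a3 a4) ((1 : R) * a1))) (P.mul_right_mem (P.w4_mid k a5 h5 a1 a4 a3) (((-1) : R) * a2))) (P.mul_right_mem (P.w4_mid k a5 h5 a2 a4 a3) (((-1) : R) * a1))) (P.mul_right_mem (P.w4_mid k a5 h5 a1 a2 a4) ((2 : R) * a3))) (P.mul_right_mem (P.w4_mid k a5 h5 a3 a2 a4) ((2 : R) * a1))) (P.mul_right_mem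 (P.w4_last k a5 h5 a1 a4 a2) (((-3) : R) * a3))) (P.mul_right_mem (P.w4_last k a5 h5 a3 a4 a2) (((-3) : R) * a1))) (P.mul_right_mem (P.w4_mid k a5 h5 a1 a4 a2) ((1 : R) * a3))) (P.mul_right_mem (P.w4_mid k a5 h5 a3 a4 a2) ((1 : R) * a1))) (P.mul_right_mem (P.w4_mid k a5 h5 a1 a2 a3) (((-2) : R) * a4))) (P.mul_right_mem (P.w4_mid k a5 h5 a4 a2 a3) (((-2) : R) * a1))) (P.mul_right_mem (P.w4_mid k a5 h5 a1 a3 a2) (((-1) : R) * a4))) (P.mul_right_mem (P.w4_mid k a5 h5 a4 a3 a2) (((-1) : R) * a1))) (P.mul_right_mem (P.w4_last k a5 h5 a2 a4 a1) ((3 : R) * a3))) (P.mul_right_mem (P.w4_last k a5 h5 a3 a4 a1) ((3 : R) * a2))) (P.mul_right_mem (P.w4_mid k a5 h5 a2 a4 a1) (((-1) : R) * a3))) (P.mul_right_mem (P.w4_mid k a5 h5 a3 a4 a1) (((-1) : R) * a2))) (P.mul_right_mem (P.w4_mid k a5 h5 a2 a3 a1) ((1 : R) * a4))) (P.mul_right_mem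 (P.w4_mid k a5 h5 a4 a3 a1) ((1 : R) * a2))
end
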